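/- If G is a graph and every proper coloring of G uses at least k colors on some member of a fixed family P of independent sets, then the graph G' obtained by adding for each P ∈ P a new vertex adjacent exactly to P satisfies χ(G') ≥ k + 1. -/
import Mathlib


/-- The graph obtained from `G` by adding, for each member `P i` of a family of
independent sets, a new apex vertex adjacent exactly to `P i` (apexes pairwise
non-adjacent). -/
def addApexes {V ι : Type} (G : SimpleGraph V) (P : ι → Set V) :
    SimpleGraph (V ⊕ ι) :=
  SimpleGraph.fromRel (fun x y =>
    match x, y with
    | Sum.inl u, Sum.inl v => G.Adj u v
    | Sum.inr i, Sum.inl v => v ∈ P i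
    | _, _ => False)

/-- If every proper coloring of `G` uses at least `k` colors on some member of a fixed
family `P` of independent sets, then the graph obtained by adding, for each `P i`, a new
vertex adjacent exactly to `P i` has chromatic number at least `k + 1`. -/
theorem chromaticNumber_addApexes
    {V ι : Type} [Fintype V] [Fintype ι] (G : SimpleGraph V) (P : ι → Set V) (k : ℕ)
    (hind : ∀ i, ∀ u ∈ P i, ∀ v ∈ P i, ¬ G.Adj u v)
    (hcol : ∀ (α : Type) (C : G.Coloring α), ∃ i, k ≤ (C '' P i).ncard) :
    (k + 1 : ℕ∞) ≤ (addApexes G P).chromaticNumber := by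
  by_contra h
  push_neg at h
  have hk : (addApexes G P).chromaticNumber ≤ (k : ℕ∞) := by
    exact Order.le_of_lt_add_one h
  rw [SimpleGraph.chromaticNumber_le_iff_colorable] at hk
  obtain ⟨C'⟩ := hk
  have hadj : ∀ {u v : V}, G.Adj u v → (addApexes G P).Adj (Sum.inl u) (Sum.inl v) := by
    intro u v huv
    refine ⟨by simpa using huv.ne, Or.inl huv⟩
  let C : G.Coloring (Fin k) := SimpleGraph.Coloring.mk (fun v => C' (Sum.inl v))
    (fun huv => C'.valid (hadj huv))
  obtain ⟨i, hi⟩ := hcol (Fin k) C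
  have hnotmem : C' (Sum.inr i) ∉ (C '' P i) := by
    rintro ⟨v, hv, hve⟩
    have : (addApexes G P).Adj (Sum.inr i) (Sum.inl v) :=
      ⟨by simp, Or.inl hv⟩
    exact C'.valid this hve.symm
  have hfin : (C '' P i).Finite := Set.toFinite _
  have h1 : (insert (C' (Sum.inr i)) (C '' P i)).ncard = (C '' P i).ncard + 1 :=
    Set.ncard_insert_of_notMem hnotmem hfin
  have h2 : (insert (C' (Sum.inr i)) (C '' P i)).ncard ≤ k := by
    calc (insert (C' (Sum.inr i)) (C '' P i)).ncard
        ≤ (Set.univ : Set (Fin k)).ncard := Set.ncard_le_ncard (Set.subset_univ _) (Set.toFinite _)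
      _ = k := by simp [Set.ncard_univ]
  omega
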